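/- ≠-free positive disjunctive Datalog programs cannot capture instance queries mediated by ALCHOI TBoxes with nominals: there exist an ALCHOI TBox T containing a nominal (namely T = {A ⊑ {a}}) and an instance query q such that no positive disjunctive Datalog program P without the ≠ predicate and no predicate q̂ of P satisfy cert((T, ∅, q), A) = cert((P, q̂), A) for all ABoxes A over the concept and role names of T. In particular, (T = {A ⊑ {a}}) is consistent with the ABox {A(a)} but inconsistent with the ABox {A(b)} for an individual b ≠ a. -/

import Mathlib

set_option autoImplicit false
set_option linter.unusedVariables false

/-! # ALCHOI with closed predicates: syntax -/

/-- Basic roles: role names `p` or their inverses `p⁻`. -/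
inductive DLRole : Type
  | name : ℕ → DLRole
  | inv : ℕ → DLRole
  deriving DecidableEq

/-- The inverse `r⁻` of a basic role. -/
def DLRole.invert : DLRole → DLRole
  | .name p => .inv p
  | .inv p => .name p

/-- The underlying role name of a basic role. -/
def DLRole.nameOf : DLRole → ℕ
  | .name p => p
  | .inv p => p

/-- ALCHOI concepts. -/
inductive DLConcept : Type
  | atom : ℕ → DLConcept            -- concept name
  | top : DLConcept
  | bot : DLConcept
  | nom : ℕ → DLConcept             -- nominal {a}
  | neg : DLConcept → DLConcept
  | conj : DLConcept → DLConcept → DLConcept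
  | disj : DLConcept → DLConcept → DLConcept
  | ex : DLRole → DLConcept → DLConcept
  | all : DLRole → DLConcept → DLConcept
  deriving DecidableEq

/-- TBox inclusions: concept inclusions and role inclusions. -/
inductive Inclusion : Type
  | concl : DLConcept → DLConcept → Inclusion
  | rolel : DLRole → DLRole → Inclusion
  deriving DecidableEq

/-- ABox assertions `A(a)`, `p(a,b)` (over concept and role *names*). -/
inductive Assertion : Type
  | ca : ℕ → ℕ → Assertion
  | ra : ℕ → ℕ → ℕ → Assertion
  deriving DecidableEq

abbrev TBox := List Inclusion
abbrev ABox := List Assertion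

/-- A closed predicate is a concept name or a role name. -/
inductive ClosedPred : Type
  | cp : ℕ → ClosedPred
  | rp : ℕ → ClosedPred
  deriving DecidableEq

/-- A knowledge base with closed predicates. -/
structure KB where
  tbox : TBox
  sig : Set ClosedPred
  abox : ABox

/-- Domain elements: named individuals (standard name assumption), fringe
individuals `c^α`, and anonymous elements. -/
inductive Elem : Type
  | ind : ℕ → Elem
  | fringe : ℕ → Inclusion → Elem
  | anon : ℕ → Elem
  deriving DecidableEq

def Elem.isFringe : Elem → Prop
  | .fringe _ _ => True
  | _ => False

/-! # Semantics -/

/-- An interpretation. -/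
structure Interp where
  dom : Set Elem
  dom_nonempty : dom.Nonempty
  intC : ℕ → Set Elem
  intR : ℕ → Set (Elem × Elem)
  intI : ℕ → Elem
  intC_sub : ∀ A, intC A ⊆ dom
  intR_sub : ∀ p, ∀ x ∈ intR p, x.1 ∈ dom ∧ x.2 ∈ dom
  intI_mem : ∀ a, intI a ∈ dom

/-- Extension of a basic role. -/
def Interp.roleExt (I : Interp) : DLRole → Set (Elem × Elem)
  | .name p => I.intR p
  | .inv p => {x | (x.2, x.1) ∈ I.intR p}

/-- Extension of a concept. -/
def Interp.cExt (I : Interp) : DLConcept → Set Elem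
  | .atom A => I.intC A
  | .top => I.dom
  | .bot => ∅
  | .nom a => {I.intI a}
  | .neg C => I.dom \ I.cExt C
  | .conj C D => I.cExt C ∩ I.cExt D
  | .disj C D => I.cExt C ∪ I.cExt D
  | .ex r C => {e | ∃ f, (e, f) ∈ I.roleExt r ∧ f ∈ I.cExt C}
  | .all r C => {e | e ∈ I.dom ∧ ∀ f, (e, f) ∈ I.roleExt r → f ∈ I.cExt C}

def Interp.satIncl (I : Interp) : Inclusion → Prop
  | .concl C D => I.cExt C ⊆ I.cExt D
  | .rolel r s => I.roleExt r ⊆ I.roleExt s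

def Interp.satAssert (I : Interp) : Assertion → Prop
  | .ca A a => I.intI a ∈ I.intC A
  | .ra p a b => (I.intI a, I.intI b) ∈ I.intR p

def Interp.satTBox (I : Interp) (T : TBox) : Prop := ∀ α ∈ T, I.satIncl α

def Interp.satABox (I : Interp) (Ab : ABox) : Prop := ∀ β ∈ Ab, I.satAssert β

/-- `I ⊨_Σ A`: `I` satisfies the ABox, and every membership in a closed
predicate is explicitly asserted. -/
def Interp.satABoxClosed (I : Interp) (sig : Set ClosedPred) (Ab : ABox) : Prop :=
  I.satABox Ab ∧
  (∀ A : ℕ, ClosedPred.cp A ∈ sig → ∀ e ∈ I.intC A,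
      ∃ a : ℕ, e = Elem.ind a ∧ Assertion.ca A a ∈ Ab) ∧
  (∀ p : ℕ, ClosedPred.rp p ∈ sig → ∀ x ∈ I.intR p,
      ∃ a b : ℕ, x = (Elem.ind a, Elem.ind b) ∧ Assertion.ra p a b ∈ Ab)

/-! ## Symbols occurring in a KB -/

def DLConcept.noms : DLConcept → Set ℕ
  | .nom a => {a}
  | .neg C => C.noms
  | .conj C D => C.noms ∪ D.noms
  | .disj C D => C.noms ∪ D.noms
  | .ex _ C => C.noms
  | .all _ C => C.noms
  | _ => ∅

def Inclusion.noms : Inclusion → Set ℕ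
  | .concl C D => C.noms ∪ D.noms
  | .rolel _ _ => ∅

def Assertion.inds : Assertion → Set ℕ
  | .ca _ a => {a}
  | .ra _ a b => {a, b}

/-- The individuals occurring in a KB (nominals of the TBox and individuals
of the ABox). -/
def KB.inds (K : KB) : Set ℕ :=
  (⋃ α ∈ K.tbox, Inclusion.noms α) ∪ ⋃ β ∈ K.abox, Assertion.inds β

def DLConcept.cnames : DLConcept → Set ℕ
  | .atom A => {A}
  | .neg C => C.cnames
  | .conj C D => C.cnames ∪ D.cnames
  | .disj C D => C.cnames ∪ D.cnames
  | .ex _ C => C.cnames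
  | .all _ C => C.cnames
  | _ => ∅

def DLConcept.rnames : DLConcept → Set ℕ
  | .neg C => C.rnames
  | .conj C D => C.rnames ∪ D.rnames
  | .disj C D => C.rnames ∪ D.rnames
  | .ex r C => {r.nameOf} ∪ C.rnames
  | .all r C => {r.nameOf} ∪ C.rnames
  | _ => ∅

def Inclusion.cnames : Inclusion → Set ℕ
  | .concl C D => C.cnames ∪ D.cnames
  | .rolel _ _ => ∅

def Inclusion.rnames : Inclusion → Set ℕ
  | .concl C D => C.rnames ∪ D.rnames
  | .rolel r s => {r.nameOf, s.nameOf}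

def TBox.cnames (T : TBox) : Set ℕ := ⋃ α ∈ T, Inclusion.cnames α
def TBox.rnames (T : TBox) : Set ℕ := ⋃ α ∈ T, Inclusion.rnames α

def Assertion.cnames : Assertion → Set ℕ
  | .ca A _ => {A}
  | .ra _ _ _ => ∅

def Assertion.rnames : Assertion → Set ℕ
  | .ca _ _ => ∅
  | .ra p _ _ => {p}

def KB.cnames (K : KB) : Set ℕ := TBox.cnames K.tbox ∪ ⋃ β ∈ K.abox, Assertion.cnames β
def KB.rnames (K : KB) : Set ℕ := TBox.rnames K.tbox ∪ ⋃ β ∈ K.abox, Assertion.rnames β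

/-- An ABox over the given sets of concept names and role names. -/
def ABoxOver (Ab : ABox) (cns rns : Set ℕ) : Prop :=
  ∀ β ∈ Ab, match β with
    | Assertion.ca A _ => A ∈ cns
    | Assertion.ra p _ _ => p ∈ rns

/-- `I ⊨ K` for a KB with closed predicates: the standard name assumption for
the individuals occurring in `K`, satisfaction of the TBox, and `I ⊨_Σ A`. -/
def isModel (I : Interp) (K : KB) : Prop :=
  (∀ a ∈ K.inds, I.intI a = Elem.ind a ∧ Elem.ind a ∈ I.dom) ∧
  I.satTBox K.tbox ∧
  I.satABoxClosed K.sig K.abox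

/-! # Normal form -/

inductive IsBasicConcept : DLConcept → Prop
  | atom (A : ℕ) : IsBasicConcept (.atom A)
  | top : IsBasicConcept .top
  | bot : IsBasicConcept .bot
  | nom (a : ℕ) : IsBasicConcept (.nom a)

inductive IsConjOfBasic : DLConcept → Prop
  | basic {C : DLConcept} : IsBasicConcept C → IsConjOfBasic C
  | conj {C D : DLConcept} : IsConjOfBasic C → IsConjOfBasic D → IsConjOfBasic (.conj C D)

inductive IsDisjOfBasic : DLConcept → Prop
  | basic {C : DLConcept} : IsBasicConcept C → IsDisjOfBasic C
  | disj {C D : DLConcept} : IsDisjOfBasic C → IsDisjOfBasic D → IsDisjOfBasic (.disj C D)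

/-- Inclusions of shape (N1). -/
def IsN1 : Inclusion → Prop
  | .concl C D => IsConjOfBasic C ∧ IsDisjOfBasic D
  | .rolel _ _ => False

/-- The existential inclusion `A ⊑ ∃r.A'` (shape (N2)). -/
def exIncl (A : ℕ) (r : DLRole) (A' : ℕ) : Inclusion :=
  .concl (.atom A) (.ex r (.atom A'))

def Inclusion.isExistential (α : Inclusion) : Prop := ∃ A r A', α = exIncl A r A'

/-- Inclusions in normal form (N1)--(N4). -/
inductive NormalIncl : Inclusion → Prop
  | n1 {C D : DLConcept} : IsConjOfBasic C → IsDisjOfBasic D → NormalIncl (.concl C D)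
  | n2 (A : ℕ) (r : DLRole) (A' : ℕ) : NormalIncl (exIncl A r A')
  | n3 (A : ℕ) (r : DLRole) (A' : ℕ) : NormalIncl (.concl (.atom A) (.all r (.atom A')))
  | n4 (r s : DLRole) : NormalIncl (.rolel r s)

/-- A TBox in normal form. -/
def NormalTBox (T : TBox) : Prop := ∀ α ∈ T, NormalIncl α

/-! # Role hierarchy and closed roles -/

/-- `r ⊑*_T s`. -/
inductive subRole (T : TBox) : DLRole → DLRole → Prop
  | refl (r : DLRole) : subRole T r r
  | inv {r s : DLRole} : subRole T r s → subRole T r.invert s.invert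
  | step {r r₁ s : DLRole} : subRole T r r₁ → Inclusion.rolel r₁ s ∈ T → subRole T r s

/-- `r ∈_T Σ`: `r ⊑*_T s` for some `s` with `s` or `s⁻` in `Σ`. -/
def roleClosed (T : TBox) (sig : Set ClosedPred) (r : DLRole) : Prop :=
  ∃ s : DLRole, subRole T r s ∧ ClosedPred.rp s.nameOf ∈ sig
/-! # Conjunctive queries -/

/-- Query atoms `A(x)`, `r(x,y)` over variables. -/
inductive QAtom : Type
  | ca : ℕ → ℕ → QAtom
  | ra : ℕ → ℕ → ℕ → QAtom
  deriving DecidableEq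

def QAtom.vars : QAtom → Set ℕ
  | .ca _ x => {x}
  | .ra _ x y => {x, y}

/-- Variables of a set of atoms. -/
def qvarsS (s : Set QAtom) : Set ℕ := ⋃ a ∈ s, QAtom.vars a

/-- A conjunctive query with answer variables `ansVars`; all remaining
variables are existentially quantified. -/
structure CQuery where
  atoms : List QAtom
  ansVars : List ℕ
  ansVars_mem : ∀ x ∈ ansVars, x ∈ qvarsS {a | a ∈ atoms}

def CQuery.atomSet (q : CQuery) : Set QAtom := {a | a ∈ q.atoms}
def CQuery.varSet (q : CQuery) : Set ℕ := qvarsS q.atomSet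

def QAtom.satBy : QAtom → Interp → (ℕ → Elem) → Prop
  | .ca A x, I, π => π x ∈ I.intC A
  | .ra p x y, I, π => (π x, π y) ∈ I.intR p

/-- `I ⊨ q(t)` for a tuple `t` of domain elements: some map `π` of the
variables into the domain sends the answer tuple to `t` and satisfies all
atoms. -/
def Interp.satCQ (I : Interp) (q : CQuery) (t : List Elem) : Prop :=
  ∃ π : ℕ → Elem, (∀ v ∈ q.varSet, π v ∈ I.dom) ∧
    q.ansVars.map π = t ∧ ∀ a ∈ q.atoms, a.satBy I π

/-- `K ⊨ q(t)` for a tuple `t` of individuals. -/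
def KB.entailsCQ (K : KB) (q : CQuery) (t : List ℕ) : Prop :=
  ∀ I : Interp, isModel I K → I.satCQ q (t.map Elem.ind)

/-- An ontology-mediated query. -/
structure OMQ where
  tbox : TBox
  sig : Set ClosedPred
  q : CQuery

def OMQ.kb (Q : OMQ) (Ab : ABox) : KB := ⟨Q.tbox, Q.sig, Ab⟩

/-- `t ∈ cert(Q, A)`: `t` is a tuple (of the query's arity) of individuals
occurring in the KB that is entailed. -/
def certOMQ (Q : OMQ) (Ab : ABox) (t : List ℕ) : Prop :=
  t.length = Q.q.ansVars.length ∧ (∀ a ∈ t, a ∈ (Q.kb Ab).inds) ∧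
  (Q.kb Ab).entailsCQ Q.q t

/-- c-variables of an OMQ. -/
def isCVar (Q : OMQ) (x : ℕ) : Prop :=
  x ∈ Q.q.ansVars ∨
  (∃ p y, (QAtom.ra p x y ∈ Q.q.atoms ∨ QAtom.ra p y x ∈ Q.q.atoms) ∧
      roleClosed Q.tbox Q.sig (.name p)) ∨
  (∃ A, QAtom.ca A x ∈ Q.q.atoms ∧ ClosedPred.cp A ∈ Q.sig)

/-- A c-safe OMQ: all variables of the query are c-variables. -/
def cSafe (Q : OMQ) : Prop := ∀ x ∈ Q.q.varSet, isCVar Q x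

/-! ## Query graph, acyclicity -/

/-- The query (Gaifman) graph of a set of atoms. -/
def queryGraphS (s : Set QAtom) : SimpleGraph ℕ where
  Adj x y := x ≠ y ∧ ∃ a ∈ s, x ∈ a.vars ∧ y ∈ a.vars
  symm := ⟨fun x y h => ⟨h.1.symm, h.2.imp fun a h' => ⟨h'.1, h'.2.2, h'.2.1⟩⟩⟩
  loopless := ⟨fun x h => h.1 rfl⟩

def CQConnectedS (s : Set QAtom) : Prop :=
  ∀ x ∈ qvarsS s, ∀ y ∈ qvarsS s, (queryGraphS s).Reachable x y

/-- Acyclic CQ: the query graph is acyclic, and every edge carries exactly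
one role atom. -/
def CQAcyclicS (s : Set QAtom) : Prop :=
  (queryGraphS s).IsAcyclic ∧
  ∀ x y, (queryGraphS s).Adj x y →
    ∃! a : QAtom, a ∈ s ∧ ∃ p, a = QAtom.ra p x y ∨ a = QAtom.ra p y x

/-- `q⁻`: the atoms of `Q` minus the role atoms connecting two c-variables. -/
def qminus (Q : OMQ) : Set QAtom :=
  {a | a ∈ Q.q.atoms ∧ ¬ ∃ p x y, a = QAtom.ra p x y ∧ isCVar Q x ∧ isCVar Q y}

/-- c-acyclicity: `q⁻` is acyclic and every connected component of `G(q⁻)`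
contains exactly one c-variable. -/
def cAcyclic (Q : OMQ) : Prop :=
  CQAcyclicS (qminus Q) ∧
  ∀ x ∈ qvarsS (qminus Q),
    ∃! y, y ∈ qvarsS (qminus Q) ∧ (queryGraphS (qminus Q)).Reachable x y ∧ isCVar Q y

/-- Instance query: a single atom, all of whose variables are answer variables. -/
def isInstanceQuery (q : CQuery) : Prop :=
  (∃ a : QAtom, q.atoms = [a]) ∧ ∀ v ∈ q.varSet, v ∈ q.ansVars

/-! ## Rooted tree presentations of acyclic CQs and query concepts -/

/-- Rooted trees presenting connected acyclic CQs: a node carries its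
variable, the concept names labelling it, and its children together with the
(possibly inverse) role connecting to them. -/
inductive QTree : Type
  | node : ℕ → List ℕ → List (DLRole × QTree) → QTree

def QTree.root : QTree → ℕ
  | .node x _ _ => x

def conjOfList : List DLConcept → DLConcept
  | [] => .top
  | C :: rest => .conj C (conjOfList rest)

mutual
  /-- The query concept `C_{q,x}` determined by a rooted tree presentation. -/
  def QTree.concept : QTree → DLConcept
    | .node _ cs children =>
        .conj (conjOfList (cs.map DLConcept.atom)) (QTree.childConcept children)
  def QTree.childConcept : List (DLRole × QTree) → DLConcept
    | [] => .top
    | (r, t) :: rest => .conj (.ex r (QTree.concept t)) (QTree.childConcept rest)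
end

/-- The role atom represented by a tree edge from `x` to `y` labelled `r`. -/
def edgeAtom (x : ℕ) (r : DLRole) (y : ℕ) : QAtom :=
  match r with
  | .name p => .ra p x y
  | .inv p => .ra p y x

mutual
  /-- The set of atoms represented by a tree. -/
  def QTree.atomSet : QTree → Set QAtom
    | .node x cs children =>
        {a | ∃ A ∈ cs, a = QAtom.ca A x} ∪ QTree.childAtomSet x children
  def QTree.childAtomSet : ℕ → List (DLRole × QTree) → Set QAtom
    | _, [] => ∅
    | x, (r, t) :: rest =>
        insert (edgeAtom x r t.root) (QTree.atomSet t) ∪ QTree.childAtomSet x rest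
end

mutual
  def QTree.varList : QTree → List ℕ
    | .node x _ children => x :: QTree.childVarList children
  def QTree.childVarList : List (DLRole × QTree) → List ℕ
    | [] => []
    | (_, t) :: rest => QTree.varList t ++ QTree.childVarList rest
end

/-- `t` is the rooted tree presentation of the CQ `q` (viewed as a set of
atoms) with root variable `x`. -/
def QTree.presents (t : QTree) (q : Set QAtom) (x : ℕ) : Prop :=
  t.root = x ∧ t.atomSet = q ∧ t.varList.Nodup
/-! ## Concept and role names occurring in an OMQ -/

def QAtom.cnames : QAtom → Set ℕ
  | .ca A _ => {A}
  | .ra _ _ _ => ∅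

def QAtom.rnames : QAtom → Set ℕ
  | .ca _ _ => ∅
  | .ra p _ _ => {p}

def OMQ.cnames (Q : OMQ) : Set ℕ := TBox.cnames Q.tbox ∪ ⋃ a ∈ Q.q.atoms, QAtom.cnames a
def OMQ.rnames (Q : OMQ) : Set ℕ := TBox.rnames Q.tbox ∪ ⋃ a ∈ Q.q.atoms, QAtom.rnames a
/-! # Cores and extensions -/

/-- The possible domain of a core for `K`: the individuals of `K` plus the
fringe individuals `c^α` for existential inclusions `α` of the TBox. -/
def coreDom (K : KB) : Set Elem :=
  {e | ∃ a ∈ K.inds, e = Elem.ind a} ∪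
  {e | ∃ a ∈ K.inds, ∃ α ∈ K.tbox, Inclusion.isExistential α ∧ e = Elem.fringe a α}

/-- A core for a KB with closed predicates (conditions (c1)--(c5)). -/
structure IsCore (Ic : Interp) (K : KB) : Prop where
  dom_sub : Ic.dom ⊆ coreDom K
  inds_sub : ∀ a ∈ K.inds, Elem.ind a ∈ Ic.dom
  sna : ∀ a ∈ K.inds, Ic.intI a = Elem.ind a
  c2 : Ic.satABoxClosed K.sig K.abox
  c3 : ∀ α ∈ K.tbox,
        (¬ α.isExistential → Ic.satIncl α) ∧
        (∀ A r A', α = exIncl A r A' → roleClosed K.tbox K.sig r → Ic.satIncl α)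
  c4 : ∀ p : ℕ, ∀ x ∈ Ic.intR p,
        (∃ a b, a ∈ K.inds ∧ b ∈ K.inds ∧ x = (Elem.ind a, Elem.ind b)) ∨
        (∃ a α, a ∈ K.inds ∧ x = (Elem.ind a, Elem.fringe a α)) ∨
        (∃ a α, a ∈ K.inds ∧ x = (Elem.fringe a α, Elem.ind a))
  c5 : ∀ e ∈ Ic.dom, ¬ e.isFringe →
        ∀ A r A', exIncl A r A' ∈ K.tbox → e ∈ Ic.intC A →
          e ∈ Ic.cExt (.ex r (.atom A'))

/-- `J` is an extension of the core `Ic` (with respect to the closed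
predicates `sig`). -/
structure IsExtension (J Ic : Interp) (sig : Set ClosedPred) : Prop where
  dom_sub : Ic.dom ⊆ J.dom
  cAgree : ∀ A : ℕ, Ic.intC A = J.intC A ∩ Ic.dom
  rAgree : ∀ p : ℕ, Ic.intR p = J.intR p ∩ (Ic.dom ×ˢ Ic.dom)
  closedC : ∀ A : ℕ, ClosedPred.cp A ∈ sig → J.intC A = Ic.intC A
  closedR : ∀ p : ℕ, ClosedPred.rp p ∈ sig → J.intR p = Ic.intR p

/-! # Types and the model building game -/

/-- The basic concepts occurring in a concept. -/
def DLConcept.basics : DLConcept → Set DLConcept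
  | .atom A => {.atom A}
  | .nom a => {.nom a}
  | .top => {.top}
  | .bot => {.bot}
  | .neg C => C.basics
  | .conj C D => C.basics ∪ D.basics
  | .disj C D => C.basics ∪ D.basics
  | .ex _ C => C.basics
  | .all _ C => C.basics

def Inclusion.basics : Inclusion → Set DLConcept
  | .concl C D => C.basics ∪ D.basics
  | .rolel _ _ => ∅

/-- `N_C⁺(T)`: the basic concepts occurring in `T`, together with `⊤`, `⊥`. -/
def TBox.basicConcepts (T : TBox) : Set DLConcept :=
  {DLConcept.top, DLConcept.bot} ∪ ⋃ α ∈ T, Inclusion.basics α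

/-- A type over `T`. -/
def IsType (T : TBox) (τ : Set DLConcept) : Prop :=
  τ ⊆ TBox.basicConcepts T ∧ DLConcept.top ∈ τ ∧ DLConcept.bot ∉ τ

/-- `type(e, I)`. -/
def typeOf (T : TBox) (I : Interp) (e : Elem) : Set DLConcept :=
  {B | B ∈ TBox.basicConcepts T ∧ e ∈ I.cExt B}

/-- `τ` is realized in `I`. -/
def realizedIn (T : TBox) (I : Interp) (τ : Set DLConcept) : Prop :=
  ∃ e ∈ I.dom, typeOf T I e = τ

def conjuncts : DLConcept → Set DLConcept
  | .conj C D => conjuncts C ∪ conjuncts D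
  | C => {C}

def disjuncts : DLConcept → Set DLConcept
  | .disj C D => disjuncts C ∪ disjuncts D
  | C => {C}

/-- `τ` satisfies an (N1) inclusion. -/
def typeSatN1 (τ : Set DLConcept) : Inclusion → Prop
  | .concl C D => conjuncts C ⊆ τ → ∃ B ∈ disjuncts D, B ∈ τ
  | .rolel _ _ => True

/-- c-types. -/
def IsCType (T : TBox) (sig : Set ClosedPred) (τ : Set DLConcept) : Prop :=
  (∃ a, DLConcept.nom a ∈ τ) ∨
  (∃ A, DLConcept.atom A ∈ τ ∧ ClosedPred.cp A ∈ sig) ∨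
  (∃ A r A', exIncl A r A' ∈ T ∧ roleClosed T sig r ∧ DLConcept.atom A ∈ τ)

/-- The locally consistent types `LC(T, Σ, I_c)`. -/
def LC (T : TBox) (sig : Set ClosedPred) (Ic : Interp) : Set (Set DLConcept) :=
  {τ | IsType T τ ∧ (∀ α ∈ T, IsN1 α → typeSatN1 τ α) ∧
       (IsCType T sig τ → realizedIn T Ic τ)}

/-- Conditions (C1) and (C2): `τ'` is a legal response to the challenge
`A ⊑ ∃r.A'` against the current type `τ`. -/
def LegalResponse (T : TBox) (A : ℕ) (r : DLRole) (A' : ℕ) (τ τ' : Set DLConcept) : Prop :=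
  DLConcept.atom A' ∈ τ' ∧
  ∀ A₁ s A₂, Inclusion.concl (.atom A₁) (.all s (.atom A₂)) ∈ T →
    (subRole T r s → DLConcept.atom A₁ ∈ τ → DLConcept.atom A₂ ∈ τ') ∧
    (subRole T r.invert s → DLConcept.atom A₁ ∈ τ' → DLConcept.atom A₂ ∈ τ)

/-- A strategy for Bob, as a partial function. -/
abbrev Strategy := Set DLConcept → Inclusion → Option (Set DLConcept)

/-- Well-formedness of a strategy: it is defined only on pairs of a non-c-type
`τ` and an existential inclusion of `T` triggered by `τ`, and returns a type
satisfying (C1) and (C2). -/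
def IsStrategy (T : TBox) (sig : Set ClosedPred) (str : Strategy) : Prop :=
  ∀ τ α τ', str τ α = some τ' →
    IsType T τ ∧ ¬ IsCType T sig τ ∧ IsType T τ' ∧
    ∃ A r A', α = exIncl A r A' ∧ α ∈ T ∧ DLConcept.atom A ∈ τ ∧
      LegalResponse T A r A' τ τ'

/-- A finite run `a α₁ τ₁ α₂ τ₂ ⋯`. -/
structure GRun where
  start : Elem
  steps : List (Inclusion × Set DLConcept)

/-- `tail(w)`. -/
def GRun.tail (T : TBox) (Ic : Interp) (w : GRun) : Set DLConcept :=
  match w.steps.getLast? with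
  | some s => s.2
  | none => typeOf T Ic w.start

/-- `w` is a (finite) run of the game on the core `Ic`: it starts at a fringe
individual of `Ic`, its inclusions are existential inclusions of `T`, its
types are types over `T`, and only its last type may be a c-type. -/
def IsRunOn (T : TBox) (sig : Set ClosedPred) (Ic : Interp) (w : GRun) : Prop :=
  (∃ c α, w.start = Elem.fringe c α) ∧ w.start ∈ Ic.dom ∧
  (∀ s ∈ w.steps, s.1 ∈ T ∧ s.1.isExistential ∧ IsType T s.2) ∧
  (∀ (i : ℕ) s, w.steps[i]? = some s → i + 1 < w.steps.length → ¬ IsCType T sig s.2)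

def FollowsFrom (str : Strategy) : Set DLConcept → List (Inclusion × Set DLConcept) → Prop
  | _, [] => True
  | τ, (α, τ') :: rest => str τ α = some τ' ∧ FollowsFrom str τ' rest

/-- `w` follows the strategy `str` on `Ic`. -/
def RunFollows (T : TBox) (Ic : Interp) (str : Strategy) (w : GRun) : Prop :=
  FollowsFrom str (typeOf T Ic w.start) w.steps

/-- A non-losing strategy for Bob on `Ic`. -/
def NonLosing (T : TBox) (sig : Set ClosedPred) (Ic : Interp) (str : Strategy) : Prop :=
  IsStrategy T sig str ∧
  ∀ w : GRun, IsRunOn T sig Ic w → RunFollows T Ic str w →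
    w.tail T Ic ∈ LC T sig Ic ∧
    (¬ IsCType T sig (w.tail T Ic) →
      ∀ A r A', exIncl A r A' ∈ T → DLConcept.atom A ∈ w.tail T Ic →
        ∃ τ', str (w.tail T Ic) (exIncl A r A') = some τ')

/-! # The marking algorithm -/

/-- The types marked by the type elimination algorithm `Mark(T, Σ, I_c)`:
the least set containing all types violating some (N1) inclusion, all
c-types not realized in `I_c`, and closed under the rule (M_∃): a type gets
marked if some existential inclusion triggered by it has all its legal
responses already marked. -/
inductive Marked (T : TBox) (sig : Set ClosedPred) (Ic : Interp) : Set DLConcept → Prop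
  | n1 {τ : Set DLConcept} : IsType T τ →
      (∃ α ∈ T, IsN1 α ∧ ¬ typeSatN1 τ α) → Marked T sig Ic τ
  | closed {τ : Set DLConcept} : IsType T τ → IsCType T sig τ →
      ¬ realizedIn T Ic τ → Marked T sig Ic τ
  | exStep {τ : Set DLConcept} {A : ℕ} {r : DLRole} {A' : ℕ} :
      IsType T τ → exIncl A r A' ∈ T → DLConcept.atom A ∈ τ →
      (∀ τ', IsType T τ' → LegalResponse T A r A' τ τ' → Marked T sig Ic τ') →
      Marked T sig Ic τ
/-! # Datalog with disjunction and negation, stable model semantics -/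

/-- Predicate symbols: the concept names (unary), the role names (binary),
the built-in inequality predicate, and auxiliary predicates. -/
inductive DPred : Type
  | concept : ℕ → DPred
  | role : ℕ → DPred
  | neq : DPred
  | aux : ℕ → DPred
  deriving DecidableEq

inductive DTerm : Type
  | var : ℕ → DTerm
  | const : ℕ → DTerm
  deriving DecidableEq

structure DAtom where
  pred : DPred
  args : List DTerm
  deriving DecidableEq

/-- Ground atoms (over the constants). -/
structure GAtom where
  pred : DPred
  args : List ℕ
  deriving DecidableEq

/-- A rule `h₁ ∨ ⋯ ∨ hₙ ← b₁, …, bₖ, not c₁, …, not cₘ`. -/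
structure DRule where
  head : List DAtom
  posBody : List DAtom
  negBody : List DAtom
  deriving DecidableEq

abbrev DProgram := List DRule

def DTerm.constOf : DTerm → Set ℕ
  | .var _ => ∅
  | .const c => {c}

def DTerm.varOf : DTerm → Set ℕ
  | .var v => {v}
  | .const _ => ∅

def DAtom.consts (a : DAtom) : Set ℕ := ⋃ t ∈ a.args, DTerm.constOf t
def DAtom.vars (a : DAtom) : Set ℕ := ⋃ t ∈ a.args, DTerm.varOf t
def DRule.atoms (ρ : DRule) : List DAtom := ρ.head ++ ρ.posBody ++ ρ.negBody
def DRule.consts (ρ : DRule) : Set ℕ := ⋃ a ∈ ρ.atoms, DAtom.consts a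
def DRule.vars (ρ : DRule) : Set ℕ := ⋃ a ∈ ρ.atoms, DAtom.vars a
def progConsts (P : DProgram) : Set ℕ := ⋃ ρ ∈ P, DRule.consts ρ

/-- Safety: every variable of the rule occurs in a positive body atom. -/
def DRule.safe (ρ : DRule) : Prop := ∀ v ∈ ρ.vars, ∃ a ∈ ρ.posBody, v ∈ a.vars

def safeProgram (P : DProgram) : Prop := ∀ ρ ∈ P, ρ.safe
def nonDisjunctive (P : DProgram) : Prop := ∀ ρ ∈ P, ρ.head.length ≤ 1
def positiveProgram (P : DProgram) : Prop := ∀ ρ ∈ P, ρ.negBody = []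
/-- No occurrence of the built-in inequality predicate. -/
def neqFree (P : DProgram) : Prop := ∀ ρ ∈ P, ∀ a ∈ ρ.atoms, a.pred ≠ DPred.neq

/-- Ground rules. -/
structure GRRule where
  head : List GAtom
  posBody : List GAtom
  negBody : List GAtom

def DTerm.subst (σ : ℕ → ℕ) : DTerm → ℕ
  | .var v => σ v
  | .const c => c

def DAtom.inst (σ : ℕ → ℕ) (a : DAtom) : GAtom := ⟨a.pred, a.args.map (DTerm.subst σ)⟩

def DRule.inst (σ : ℕ → ℕ) (ρ : DRule) : GRRule :=
  ⟨ρ.head.map (DAtom.inst σ), ρ.posBody.map (DAtom.inst σ), ρ.negBody.map (DAtom.inst σ)⟩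

/-- The grounding of a program: all instances of its rules over the
constants occurring in the program. -/
def grounding (P : DProgram) : Set GRRule :=
  {g | ∃ ρ ∈ P, ∃ σ : ℕ → ℕ, (∀ v ∈ DRule.vars ρ, σ v ∈ progConsts P) ∧ g = DRule.inst σ ρ}

/-- A constant occurring in a non-inequality atom of `I`. -/
def activeConst (I : Finset GAtom) (c : ℕ) : Prop :=
  ∃ g ∈ I, g.pred ≠ DPred.neq ∧ c ∈ g.args

/-- The built-in semantics of the inequality predicate: `a ≠ b` holds in `I`
iff `a` and `b` are distinct constants both occurring in non-inequality atoms
of `I`. -/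
def respectsNeq (I : Finset GAtom) : Prop :=
  ∀ args : List ℕ, (⟨DPred.neq, args⟩ : GAtom) ∈ I ↔
    ∃ a b : ℕ, args = [a, b] ∧ a ≠ b ∧ activeConst I a ∧ activeConst I b

/-- `I` is a (Herbrand) model of a set of positive ground rules. -/
def isHModel (I : Finset GAtom) (G : Set GRRule) : Prop :=
  respectsNeq I ∧ ∀ g ∈ G, (∀ b ∈ g.posBody, b ∈ I) → ∃ h ∈ g.head, h ∈ I

/-- The GL-reduct of a set of ground rules with respect to `I`. -/
def glReduct (G : Set GRRule) (I : Finset GAtom) : Set GRRule :=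
  {g' | ∃ g ∈ G, (∀ n ∈ g.negBody, n ∉ I) ∧ g' = ⟨g.head, g.posBody, []⟩}

/-- `I` is a stable model of `P`: a minimal model of the GL-reduct of the
grounding of `P` with respect to `I`. -/
def isStable (P : DProgram) (I : Finset GAtom) : Prop :=
  isHModel I (glReduct (grounding P) I) ∧
  ∀ J : Finset GAtom, isHModel J (glReduct (grounding P) I) → J ⊆ I → J = I

/-- ABox assertions as facts. -/
def assertFact : Assertion → DRule
  | .ca A a => ⟨[⟨DPred.concept A, [DTerm.const a]⟩], [], []⟩
  | .ra p a b => ⟨[⟨DPred.role p, [DTerm.const a, DTerm.const b]⟩], [], []⟩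

def aboxFacts (Ab : ABox) : DProgram := Ab.map assertFact

/-- Ground atoms as facts. -/
def gfact (g : GAtom) : DRule := ⟨[⟨g.pred, g.args.map DTerm.const⟩], [], []⟩

def factProg (F : List GAtom) : DProgram := F.map gfact

def GAtom.rename (ρ : ℕ → ℕ) (g : GAtom) : GAtom := ⟨g.pred, g.args.map ρ⟩

def gconsts (F : List GAtom) : Set ℕ := ⋃ g ∈ F, {c | c ∈ g.args}

/-- `t` is a certain answer to the query `(P, q̂)` over the database `D`:
`q̂(t)` belongs to every stable model of `P ∪ D`. -/
def certD (P : DProgram) (qp : DPred) (D : DProgram) (t : List ℕ) : Prop :=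
  ∀ I : Finset GAtom, isStable (P ++ D) I → (⟨qp, t⟩ : GAtom) ∈ I

/-!
The ABox `{A(b)}` with `b ≠ a` is inconsistent with `{A ⊑ {a}}`, so every pair of its
individuals, in particular `(b, b)`, is a certain answer, whereas the one-point model with empty
roles shows that `(a, a)` is not a certain answer over `{A(a)}`. A `≠`-free positive program `P`
in which `b` does not occur cannot see this difference: pulling a stable model `J` of
`P ∪ {A(a)}` back along the collapse `b ↦ a` (and adding the inequalities the built-in semantics
demands) gives a model of `P ∪ {A(b)}`, whose minimal submodels are stable and so contain
`q̂(b, b)`; its image `q̂(a, a)` then lies in `J`. Here `q̂` cannot be `≠`, since `≠(b, b)` never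
holds.
-/

section Renaming

variable (h : ℕ → ℕ)

def DTerm.rename : DTerm → DTerm
  | .var v => .var v
  | .const c => .const (h c)

def DAtom.rename (a : DAtom) : DAtom := ⟨a.pred, a.args.map (DTerm.rename h)⟩

def DRule.rename (ρ : DRule) : DRule :=
  ⟨ρ.head.map (DAtom.rename h), ρ.posBody.map (DAtom.rename h), ρ.negBody.map (DAtom.rename h)⟩

def Assertion.rename : Assertion → Assertion
  | .ca A a => .ca A (h a)
  | .ra p a b => .ra p (h a) (h b)

variable {h}

theorem DAtom.inst_rename (σ : ℕ → ℕ) (a : DAtom) :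
    (a.rename h).inst (h ∘ σ) = (a.inst σ).rename h := by
  simp only [DAtom.inst, DAtom.rename, GAtom.rename, List.map_map, GAtom.mk.injEq, true_and]
  refine List.map_congr_left fun t _ => ?_
  cases t <;> rfl

theorem DRule.inst_rename (σ : ℕ → ℕ) (ρ : DRule) :
    (ρ.rename h).inst (h ∘ σ) =
      ⟨(ρ.inst σ).head.map (GAtom.rename h), (ρ.inst σ).posBody.map (GAtom.rename h),
        (ρ.inst σ).negBody.map (GAtom.rename h)⟩ := by
  simp only [DRule.inst, DRule.rename, List.map_map, GRRule.mk.injEq]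
  refine ⟨?_, ?_, ?_⟩ <;> exact List.map_congr_left fun a _ => DAtom.inst_rename σ a

theorem DRule.atoms_rename (ρ : DRule) : (ρ.rename h).atoms = ρ.atoms.map (DAtom.rename h) := by
  simp [DRule.atoms, DRule.rename]

theorem DTerm.varOf_rename (t : DTerm) : (t.rename h).varOf = t.varOf := by
  cases t <;> rfl

theorem DAtom.vars_rename (a : DAtom) : (a.rename h).vars = a.vars := by
  simp [DAtom.vars, DAtom.rename, DTerm.varOf_rename]

theorem DRule.vars_rename (ρ : DRule) : (ρ.rename h).vars = ρ.vars := by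
  ext v
  simp [DRule.vars, DRule.atoms_rename, DAtom.vars_rename]

theorem DAtom.rename_eq_self {a : DAtom} (hfix : ∀ c ∈ a.consts, h c = c) : a.rename h = a := by
  refine congrArg (DAtom.mk a.pred) ((List.map_congr_left fun t ht => ?_).trans a.args.map_id)
  cases t with
  | var v => rfl
  | const c => exact congrArg DTerm.const (hfix c (Set.mem_biUnion ht rfl))

theorem DRule.rename_eq_self {ρ : DRule} (hfix : ∀ c ∈ ρ.consts, h c = c) : ρ.rename h = ρ := by
  have hatom : ∀ a ∈ ρ.atoms, a.rename h = a := fun a ha =>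
    DAtom.rename_eq_self fun c hc => hfix c (Set.mem_biUnion ha hc)
  obtain ⟨hd, pb, nb⟩ := ρ
  simp only [DRule.rename, DRule.mk.injEq]
  refine ⟨?_, ?_, ?_⟩ <;> refine (List.map_congr_left fun a ha => hatom a ?_).trans (List.map_id _)
    <;> simp [DRule.atoms, ha]

theorem assertFact_rename (β : Assertion) : (assertFact β).rename h = assertFact (β.rename h) := by
  cases β <;> rfl

theorem DTerm.constOf_rename (t : DTerm) : (t.rename h).constOf = h '' t.constOf := by
  cases t <;> simp [DTerm.rename, DTerm.constOf]

theorem progConsts_map_rename (P : DProgram) :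
    progConsts (P.map (DRule.rename h)) = h '' progConsts P := by
  ext c
  simp only [progConsts, DRule.consts, DAtom.consts, Set.mem_iUnion, Set.mem_image, exists_prop,
    List.mem_map, exists_exists_and_eq_and, DRule.atoms_rename, DAtom.rename, DTerm.constOf_rename]
  aesop

end Renaming

theorem finite_progConsts (P : DProgram) : (progConsts P).Finite :=
  Set.Finite.biUnion P.finite_toSet fun ρ _ => Set.Finite.biUnion ρ.atoms.finite_toSet
    fun a _ => Set.Finite.biUnion a.args.finite_toSet fun t _ => by
      cases t <;> simp [DTerm.constOf]

theorem mem_progConsts_of_mem_inst {P : DProgram} {ρ : DRule} (hρ : ρ ∈ P) {σ : ℕ → ℕ}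
    (hσ : ∀ v ∈ ρ.vars, σ v ∈ progConsts P) {a : DAtom} (ha : a ∈ ρ.atoms) {c : ℕ}
    (hc : c ∈ (a.inst σ).args) : c ∈ progConsts P := by
  obtain ⟨t, ht, rfl⟩ := List.mem_map.1 hc
  cases t with
  | var v => exact hσ v (Set.mem_biUnion ha (Set.mem_biUnion ht rfl))
  | const c => exact Set.mem_biUnion hρ (Set.mem_biUnion ha (Set.mem_biUnion ht rfl))

section StableModels

variable {P : DProgram}

theorem positiveProgram_map_rename (hP : positiveProgram P) (h : ℕ → ℕ) :
    positiveProgram (P.map (DRule.rename h)) := by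
  simp only [positiveProgram, List.forall_mem_map]
  exact fun ρ hρ => by simp [DRule.rename, hP ρ hρ]

theorem negBody_of_mem_grounding (hP : positiveProgram P) {g : GRRule} (hg : g ∈ grounding P) :
    g.negBody = [] := by
  obtain ⟨ρ, hρ, σ, -, rfl⟩ := hg
  simp [DRule.inst, hP ρ hρ]

theorem reduct_mem_glReduct (hP : positiveProgram P) {g : GRRule} (hg : g ∈ grounding P)
    (I : Finset GAtom) : ⟨g.head, g.posBody, []⟩ ∈ glReduct (grounding P) I :=
  ⟨g, hg, by simp [negBody_of_mem_grounding hP hg], rfl⟩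

theorem glReduct_grounding_eq (hP : positiveProgram P) (I I' : Finset GAtom) :
    glReduct (grounding P) I = glReduct (grounding P) I' := by
  ext g'
  constructor <;> rintro ⟨g, hg, -, rfl⟩ <;> exact reduct_mem_glReduct hP hg _

theorem exists_isStable_subset (hP : positiveProgram P) {I : Finset GAtom}
    (hI : isHModel I (glReduct (grounding P) I)) : ∃ I₀ ⊆ I, isStable P I₀ := by
  obtain ⟨I₀, hI₀I, hmin⟩ := exists_minimal_le_of_wellFoundedLT
    (fun X : Finset GAtom => isHModel X (glReduct (grounding P) X)) I hI
  refine ⟨I₀, hI₀I, hmin.1, fun J hJ hJI₀ => hmin.eq_of_le ?_ hJI₀⟩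
  rwa [glReduct_grounding_eq hP J I₀]

theorem neq_self_notMem {I : Finset GAtom} (hI : respectsNeq I) (c : ℕ) :
    (⟨DPred.neq, [c, c]⟩ : GAtom) ∉ I := by
  intro hc
  obtain ⟨a, b, hab, hne, -⟩ := (hI _).1 hc
  simp only [List.cons.injEq, and_true] at hab
  exact hne (hab.1.symm.trans hab.2)

end StableModels

section Inequality

def withNeq (S : Finset GAtom) : Finset GAtom :=
  S ∪ (S.biUnion fun g => g.args.toFinset).offDiag.image fun p => ⟨DPred.neq, [p.1, p.2]⟩

variable {S : Finset GAtom}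

theorem mem_withNeq {g : GAtom} :
    g ∈ withNeq S ↔ g ∈ S ∨
      ∃ a b, a ≠ b ∧ (∃ x ∈ S, a ∈ x.args) ∧ (∃ y ∈ S, b ∈ y.args) ∧ g = ⟨DPred.neq, [a, b]⟩ := by
  simp only [withNeq, Finset.mem_union, Finset.mem_image, Finset.mem_offDiag, Finset.mem_biUnion,
    List.mem_toFinset, Prod.exists]
  aesop

theorem mem_of_mem_withNeq (hS : ∀ g ∈ S, g.pred ≠ DPred.neq) {g : GAtom} (hg : g ∈ withNeq S)
    (hgp : g.pred ≠ DPred.neq) : g ∈ S := by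
  rcases mem_withNeq.1 hg with hg | ⟨a, b, -, -, -, rfl⟩
  · exact hg
  · exact absurd rfl hgp

theorem activeConst_withNeq (hS : ∀ g ∈ S, g.pred ≠ DPred.neq) (c : ℕ) :
    activeConst (withNeq S) c ↔ ∃ g ∈ S, c ∈ g.args := by
  constructor
  · rintro ⟨g, hg, hgp, hc⟩
    exact ⟨g, mem_of_mem_withNeq hS hg hgp, hc⟩
  · rintro ⟨g, hg, hc⟩
    exact ⟨g, mem_withNeq.2 (Or.inl hg), hS g hg, hc⟩

theorem respectsNeq_withNeq (hS : ∀ g ∈ S, g.pred ≠ DPred.neq) : respectsNeq (withNeq S) := by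
  intro args
  simp only [activeConst_withNeq hS, mem_withNeq]
  constructor
  · rintro (hg | ⟨a, b, hab, ha, hb, hg⟩)
    · exact absurd rfl (hS _ hg)
    · exact ⟨a, b, congrArg GAtom.args hg, hab, ha, hb⟩
  · rintro ⟨a, b, rfl, hab, ha, hb⟩
    exact Or.inr ⟨a, b, hab, ha, hb, rfl⟩

end Inequality

theorem finite_listsOver {K : Set ℕ} (hK : K.Finite) (n : ℕ) :
    {l : List ℕ | l.length = n ∧ ∀ c ∈ l, c ∈ K}.Finite := by
  have := hK.to_subtype
  refine ((List.finite_length_eq K n).image (List.map Subtype.val)).subset ?_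
  rintro l ⟨hl, hlK⟩
  exact ⟨l.pmap Subtype.mk hlK, by simpa using hl, by simp [List.map_pmap]⟩

section Pullback

variable (h : ℕ → ℕ)

def preimageAtoms (K : Set ℕ) (J : Finset GAtom) : Set GAtom :=
  {g | g.pred ≠ DPred.neq ∧ (∀ c ∈ g.args, c ∈ K) ∧ g.rename h ∈ J}

theorem finite_preimageAtoms {K : Set ℕ} (hK : K.Finite) (J : Finset GAtom) :
    (preimageAtoms h K J).Finite := by
  refine (J.finite_toSet.biUnion fun j _ =>
    (finite_listsOver hK j.args.length).image (GAtom.mk j.pred)).subset ?_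
  rintro ⟨p, args⟩ ⟨-, hargs, hJ⟩
  exact Set.mem_biUnion hJ ⟨args, ⟨by simp [GAtom.rename], hargs⟩, rfl⟩

noncomputable def pullback (Q : DProgram) (J : Finset GAtom) : Finset GAtom :=
  withNeq (finite_preimageAtoms h (finite_progConsts Q) J).toFinset

variable {h} {Q : DProgram} {J : Finset GAtom}

theorem respectsNeq_pullback : respectsNeq (pullback h Q J) :=
  respectsNeq_withNeq fun _ hg => ((Set.Finite.mem_toFinset _).1 hg).1

theorem mem_pullback_iff {g : GAtom} (hgp : g.pred ≠ DPred.neq) :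
    g ∈ pullback h Q J ↔ g ∈ preimageAtoms h (progConsts Q) J := by
  rw [← Set.Finite.mem_toFinset (finite_preimageAtoms h (finite_progConsts Q) J)]
  exact ⟨fun hg => mem_of_mem_withNeq (fun _ hx => ((Set.Finite.mem_toFinset _).1 hx).1) hg hgp,
    fun hg => mem_withNeq.2 (Or.inl hg)⟩

theorem isHModel_pullback (hQ : positiveProgram Q) (hQneq : neqFree Q)
    (hJ : isHModel J (glReduct (grounding (Q.map (DRule.rename h))) J)) :
    isHModel (pullback h Q J) (glReduct (grounding Q) (pullback h Q J)) := by
  refine ⟨respectsNeq_pullback, ?_⟩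
  rintro _ ⟨_, ⟨ρ, hρ, σ, hσ, rfl⟩, -, rfl⟩ hbody
  have hground : (ρ.rename h).inst (h ∘ σ) ∈ grounding (Q.map (DRule.rename h)) := by
    refine ⟨ρ.rename h, List.mem_map_of_mem hρ, h ∘ σ, fun v hv => ?_, rfl⟩
    rw [progConsts_map_rename]
    exact Set.mem_image_of_mem h (hσ v (DRule.vars_rename (h := h) ρ ▸ hv))
  have hbodyJ : ∀ b ∈ ((ρ.rename h).inst (h ∘ σ)).posBody, b ∈ J := by
    rw [DRule.inst_rename]
    simp only [DRule.inst, List.map_map, List.forall_mem_map]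
    intro β hβ
    have hβp : β.pred ≠ DPred.neq := hQneq ρ hρ β (by simp [DRule.atoms, hβ])
    exact ((mem_pullback_iff hβp).1 (hbody _ (List.mem_map_of_mem hβ))).2.2
  obtain ⟨_, hx, hxJ⟩ :=
    hJ.2 _ (reduct_mem_glReduct (positiveProgram_map_rename hQ h) hground J) hbodyJ
  rw [DRule.inst_rename] at hx
  simp only [DRule.inst, List.map_map, List.mem_map] at hx
  obtain ⟨η, hη, rfl⟩ := hx
  have hηatoms : η ∈ ρ.atoms := by simp [DRule.atoms, hη]
  refine ⟨η.inst σ, List.mem_map_of_mem hη, (mem_pullback_iff (hQneq ρ hρ η hηatoms)).2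
    ⟨hQneq ρ hρ η hηatoms, fun c hc => mem_progConsts_of_mem_inst hρ hσ hηatoms hc, hxJ⟩⟩

theorem exists_isStable_of_isHModel_rename (hQ : positiveProgram Q) (hQneq : neqFree Q)
    (hJ : isHModel J (glReduct (grounding (Q.map (DRule.rename h))) J)) :
    ∃ I, isStable Q I ∧ ∀ g ∈ I, g.pred ≠ DPred.neq → g.rename h ∈ J := by
  obtain ⟨I, hIJ, hI⟩ := exists_isStable_subset hQ (isHModel_pullback hQ hQneq hJ)
  exact ⟨I, hI, fun g hg hgp => ((mem_pullback_iff hgp).1 (hIJ hg)).2.2⟩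

end Pullback

section ABoxFacts

variable {P : DProgram}

theorem positiveProgram_append_aboxFacts (hP : positiveProgram P) (Ab : ABox) :
    positiveProgram (P ++ aboxFacts Ab) := by
  simp only [positiveProgram, List.mem_append, aboxFacts, List.mem_map]
  rintro ρ (hρ | ⟨β, -, rfl⟩)
  · exact hP ρ hρ
  · cases β <;> rfl

theorem neqFree_append_aboxFacts (hP : neqFree P) (Ab : ABox) : neqFree (P ++ aboxFacts Ab) := by
  simp only [neqFree, List.mem_append, aboxFacts, List.mem_map]
  rintro ρ (hρ | ⟨β, -, rfl⟩)
  · exact hP ρ hρ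
  · cases β <;> simp [assertFact, DRule.atoms]

theorem map_rename_append_aboxFacts {h : ℕ → ℕ} (hfix : ∀ c ∈ progConsts P, h c = c)
    (Ab : ABox) :
    (P ++ aboxFacts Ab).map (DRule.rename h) = P ++ aboxFacts (Ab.map (Assertion.rename h)) := by
  rw [List.map_append, aboxFacts, aboxFacts, List.map_map, List.map_map]
  congr 1
  · exact (List.map_congr_left fun ρ hρ =>
      DRule.rename_eq_self fun c hc => hfix c (Set.mem_biUnion hρ hc)).trans (List.map_id P)
  · exact List.map_congr_left fun β _ => assertFact_rename β

theorem mem_of_certD_collapse (hP : positiveProgram P) (hPneq : neqFree P) {A a b : ℕ}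
    (hb : b ∉ progConsts P) {qp : DPred} (hcert : certD P qp (aboxFacts [Assertion.ca A b]) [b, b])
    {J : Finset GAtom} (hJ : isStable (P ++ aboxFacts [Assertion.ca A a]) J) :
    (⟨qp, [a, a]⟩ : GAtom) ∈ J := by
  set h : ℕ → ℕ := Function.update id b a with hh
  have hfix : ∀ c ∈ progConsts P, h c = c := fun c hc =>
    Function.update_of_ne (ne_of_mem_of_not_mem hc hb) _ _
  have hJ' : isHModel J (glReduct (grounding
      ((P ++ aboxFacts [Assertion.ca A b]).map (DRule.rename h))) J) := by
    rw [map_rename_append_aboxFacts hfix]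
    simpa [Assertion.rename, hh] using hJ.1
  obtain ⟨I, hI, hIJ⟩ := exists_isStable_of_isHModel_rename
    (positiveProgram_append_aboxFacts hP _) (neqFree_append_aboxFacts hPneq _) hJ'
  have hq := hcert I hI
  have hqp : qp ≠ DPred.neq := by
    rintro rfl
    exact neq_self_notMem hI.1.1 b hq
  simpa [GAtom.rename, hh] using hIJ _ hq hqp

end ABoxFacts

section NominalTBox

def roleQuery (p : ℕ) : CQuery where
  atoms := [QAtom.ra p 0 1]
  ansVars := [0, 1]
  ansVars_mem x hx := Set.mem_biUnion (x := QAtom.ra p 0 1) (by simp) (by simpa [QAtom.vars] using hx)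

theorem isInstanceQuery_roleQuery (p : ℕ) : isInstanceQuery (roleQuery p) := by
  refine ⟨⟨_, rfl⟩, fun v hv => ?_⟩
  simpa [CQuery.varSet, CQuery.atomSet, qvarsS, roleQuery, QAtom.vars] using hv

def singletonInterp (a : ℕ) : Interp where
  dom := {Elem.ind a}
  dom_nonempty := Set.singleton_nonempty _
  intC _ := {Elem.ind a}
  intR _ := ∅
  intI _ := Elem.ind a
  intC_sub _ := subset_rfl
  intR_sub _ _ hx := absurd hx (Set.notMem_empty _)
  intI_mem _ := rfl

variable {A a b : ℕ}

theorem inds_nominalKB {sig : Set ClosedPred} :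
    KB.inds ⟨[.concl (.atom A) (.nom a)], sig, [.ca A b]⟩ = {a, b} := by
  ext c
  simp [KB.inds, Inclusion.noms, DLConcept.noms, Assertion.inds, or_comm]

theorem isModel_singletonInterp :
    isModel (singletonInterp a) ⟨[.concl (.atom A) (.nom a)], ∅, [.ca A a]⟩ := by
  refine ⟨fun c hc => ?_, ?_, ?_, fun _ h => absurd h (Set.notMem_empty _),
    fun _ h => absurd h (Set.notMem_empty _)⟩
  · rw [inds_nominalKB, Set.pair_eq_singleton, Set.mem_singleton_iff] at hc
    exact ⟨congrArg Elem.ind hc.symm, hc ▸ rfl⟩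
  · simp [Interp.satTBox, Interp.satIncl, Interp.cExt, singletonInterp]
  · simp [Interp.satABox, Interp.satAssert, singletonInterp]

theorem not_isModel_of_ne (hb : b ≠ a) (sig : Set ClosedPred) (I : Interp) :
    ¬ isModel I ⟨[.concl (.atom A) (.nom a)], sig, [.ca A b]⟩ := by
  rintro ⟨hsna, hT, hA, -⟩
  have hmem := hT _ (List.mem_singleton_self _) (hA _ (List.mem_singleton_self _))
  simp only [Interp.cExt, Set.mem_singleton_iff] at hmem
  rw [(hsna b (by simp [inds_nominalKB])).1, (hsna a (by simp [inds_nominalKB])).1] at hmem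
  exact hb (Elem.ind.inj hmem)

theorem certOMQ_of_forall_not_isModel {Q : OMQ} {Ab : ABox} {t : List ℕ}
    (hlen : t.length = Q.q.ansVars.length) (hinds : ∀ c ∈ t, c ∈ (Q.kb Ab).inds)
    (hinc : ∀ I, ¬ isModel I (Q.kb Ab)) : certOMQ Q Ab t :=
  ⟨hlen, hinds, fun I hI => absurd hI (hinc I)⟩

theorem not_certOMQ_roleQuery (p : ℕ) (t : List ℕ) :
    ¬ certOMQ ⟨[.concl (.atom A) (.nom a)], ∅, roleQuery p⟩ [.ca A a] t := by
  rintro ⟨-, -, hent⟩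
  obtain ⟨π, -, -, hatoms⟩ := hent _ isModel_singletonInterp
  exact Set.notMem_empty _ (hatoms _ (List.mem_singleton_self _))

theorem aboxOver_nominalTBox (rns : Set ℕ) :
    ABoxOver [.ca A b] (TBox.cnames [.concl (.atom A) (.nom a)]) rns := by
  simp [ABoxOver, TBox.cnames, Inclusion.cnames, DLConcept.cnames]

end NominalTBox

/-- `≠`-free positive disjunctive Datalog programs cannot
capture instance queries mediated by ALCHOI TBoxes with nominals: for the
TBox `T = {A ⊑ {a}}` (which contains a nominal) there is an instance query
`q` such that no `≠`-free positive disjunctive Datalog program `P` and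
predicate `q̂` satisfy `cert((T, ∅, q), A) = cert((P, q̂), A)` for all ABoxes
`A` over the concept and role names of `T`. In particular, `T` is consistent
with the ABox `{A(a)}` but inconsistent with `{A(b)}` for any individual
`b ≠ a`. -/
theorem stmt16_no_neqfree_rewriting :
    ∃ (T : TBox) (q : CQuery),
      T = [Inclusion.concl (DLConcept.atom 0) (DLConcept.nom 0)] ∧
      (∃ α ∈ T, (Inclusion.noms α).Nonempty) ∧
      isInstanceQuery q ∧
      (∀ P : DProgram, safeProgram P → positiveProgram P → neqFree P →
        ∀ qp : DPred,
          ¬ ∀ Ab : ABox, ABoxOver Ab (TBox.cnames T) (TBox.rnames T) →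
              ∀ t : List ℕ,
                (certOMQ ⟨T, ∅, q⟩ Ab t ↔ certD P qp (aboxFacts Ab) t)) ∧
      (∃ I : Interp, isModel I ⟨T, ∅, [Assertion.ca 0 0]⟩) ∧
      (∀ b : ℕ, b ≠ 0 → ¬ ∃ I : Interp, isModel I ⟨T, ∅, [Assertion.ca 0 b]⟩) := by
  refine ⟨_, roleQuery 0, rfl, ⟨_, List.mem_singleton_self _, 0, by simp [Inclusion.noms,
    DLConcept.noms]⟩, isInstanceQuery_roleQuery 0, ?_, ⟨_, isModel_singletonInterp⟩,
    fun b hb ⟨I, hI⟩ => not_isModel_of_ne hb ∅ I hI⟩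
  rintro P - hP hPneq qp hcapture
  obtain ⟨b, hb⟩ := ((finite_progConsts P).insert 0).exists_notMem
  rw [Set.mem_insert_iff, not_or] at hb
  have hcert : certD P qp (aboxFacts [.ca 0 b]) [b, b] :=
    (hcapture _ (aboxOver_nominalTBox _) _).1 <| certOMQ_of_forall_not_isModel rfl
      (by simp [OMQ.kb, inds_nominalKB]) (not_isModel_of_ne hb.1 ∅)
  exact not_certOMQ_roleQuery 0 [0, 0] <| (hcapture _ (aboxOver_nominalTBox _) _).2
    fun J hJ => mem_of_certD_collapse hP hPneq hb.2 hcert hJ
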